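/- arXiv:2504.06119 — 2 statements merged into one kernel-verified Lean document; each statement's English description precedes it below -/
import Mathlib

section
/- Let X and Y be real inner product spaces, M : X → X a self-adjoint linear map, G : X → Y a linear map, and μ, Δt ∈ ℝ. Suppose u, u' ∈ X satisfy ⟨M(u' − u), v⟩ + Δt·μ·⟨Gu', Gv⟩ = 0 for every v ∈ X, and E, E' ∈ ℝ satisfy E' = E + Δt·μ·⟨G((u + u')/2), Gu'⟩. Then ½⟨Mu', u'⟩ + E' = ½⟨Mu, u⟩ + E. -/
open scoped RealInnerProductSpace

/-- Total-energy conservation of the implicit viscous integrator: the dissipated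
kinetic energy is transferred exactly into internal energy. -/
theorem viscous_integrator_conserves_total_energy
    (X Y : Type*) [NormedAddCommGroup X] [InnerProductSpace ℝ X]
    [NormedAddCommGroup Y] [InnerProductSpace ℝ Y]
    (M : X →ₗ[ℝ] X) (hM : ∀ x y : X, ⟪M x, y⟫ = ⟪x, M y⟫)
    (G : X →ₗ[ℝ] Y) (μ Δt : ℝ)
    (u u' : X)
    (h : ∀ v : X, ⟪M (u' - u), v⟫ + Δt * μ * ⟪G u', G v⟫ = 0)
    (E E' : ℝ)
    (hE : E' = E + Δt * μ * ⟪G ((2 : ℝ)⁻¹ • (u + u')), G u'⟫) :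
    (2 : ℝ)⁻¹ * ⟪M u', u'⟫ + E' = (2 : ℝ)⁻¹ * ⟪M u, u⟫ + E := by
  have h1 := h ((2 : ℝ)⁻¹ • (u + u'))
  have hsym : ⟪M u', u⟫ = ⟪M u, u'⟫ := by rw [hM, real_inner_comm]
  have hG : ⟪G ((2 : ℝ)⁻¹ • (u + u')), G u'⟫ = ⟪G u', G ((2 : ℝ)⁻¹ • (u + u'))⟫ :=
    real_inner_comm _ _
  simp only [map_sub, inner_sub_left, inner_smul_right, inner_add_right, map_smul, map_add,
    inner_smul_left, inner_add_left, RingHom.id_apply, RCLike.ofReal_real_eq_id, id] at h1 hE hG ⊢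
  rw [hE, hG]
  linarith [h1, hsym]
end

section
/- Let V₁ and V₂ be real inner product spaces, and let C : V₁ → V₂ and C* : V₂ → V₁ be linear maps that are adjoint to each other, i.e. ⟨Cx, y⟩ = ⟨x, C*y⟩ for all x ∈ V₁, y ∈ V₂. Let η, Δt ∈ ℝ. Suppose B, B' ∈ V₂ satisfy B' − B = −Δt·η·C(C*B'), and E, E' ∈ ℝ satisfy E' = E + Δt·η·⟨C*((B + B')/2), C*B'⟩. Then ½‖B'‖² + E' = ½‖B‖² + E. -/
open scoped RealInnerProductSpace

/-- Total-energy conservation of the implicit resistive integrator: the Ohmic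
dissipation is transferred exactly into internal energy. -/
theorem resistive_integrator_conserves_total_energy
    (V₁ V₂ : Type*) [NormedAddCommGroup V₁] [InnerProductSpace ℝ V₁]
    [NormedAddCommGroup V₂] [InnerProductSpace ℝ V₂]
    (C : V₁ →ₗ[ℝ] V₂) (Cs : V₂ →ₗ[ℝ] V₁)
    (hadj : ∀ (x : V₁) (y : V₂), ⟪C x, y⟫ = ⟪x, Cs y⟫)
    (η Δt : ℝ) (B B' : V₂)
    (hB : B' - B = -(Δt * η) • C (Cs B'))
    (E E' : ℝ)
    (hE : E' = E + Δt * η * ⟪Cs ((2 : ℝ)⁻¹ • (B + B')), Cs B'⟫) :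
    (2 : ℝ)⁻¹ * ‖B'‖ ^ 2 + E' = (2 : ℝ)⁻¹ * ‖B‖ ^ 2 + E := by
  have key : ⟪B + B', B' - B⟫ = ‖B'‖ ^ 2 - ‖B‖ ^ 2 := by
    rw [inner_add_left, inner_sub_right, inner_sub_right,
      real_inner_self_eq_norm_sq, real_inner_self_eq_norm_sq,
      real_inner_comm B B']
    ring
  have h2 : ⟪B + B', B' - B⟫ = -(Δt * η) * ⟪Cs (B + B'), Cs B'⟫ := by
    rw [hB, inner_smul_right]
    congr 1
    exact (real_inner_comm _ _).trans ((hadj _ _).trans (real_inner_comm _ _))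
  have hE' : E' = E + Δt * η * (2 : ℝ)⁻¹ * ⟪Cs (B + B'), Cs B'⟫ := by
    rw [hE, map_smul, inner_smul_left]
    simp only [conj_trivial]
    ring
  have := key.symm.trans h2
  rw [hE']
  nlinarith [this]
end
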